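/- arXiv:1602.07167 — 7 statements merged into one kernel-verified Lean document; each statement's English description precedes it below -/
import Mathlib

section
/- Let M be a matroid and F a flat of M. Define cyc_M(F) as the union of all circuits of M contained in F. Then cyc_M(F) is a flat of M. -/
open Matroid Set
open scoped Classical

variable {α : Type*}

/-- A circuit of a matroid: a minimal dependent set. -/
def Matroid.Circuit' (M : Matroid α) (C : Set α) : Prop :=
  M.Dep C ∧ ∀ D, D ⊂ C → M.Indep D

/-- The cyclic part `cyc_M(F)` of a set `F`: the union of all circuits of `M` contained
in `F`. -/
def Matroid.cyc (M : Matroid α) (F : Set α) : Set α :=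
  ⋃₀ {C | M.Circuit' C ∧ C ⊆ F}

/-- The (extended) rank of a set in a matroid: the supremum of the cardinalities of the
independent subsets. -/
noncomputable def Matroid.eRk' (M : Matroid α) (X : Set α) : ℕ∞ :=
  ⨆ I ∈ {I | M.Indep I ∧ I ⊆ X}, I.encard

/-- The rank of a matroid. -/
noncomputable def Matroid.rk' (M : Matroid α) : ℕ∞ := M.eRk' M.E

/-- A matroid is loopfree if every element of the ground set is independent. -/
def Matroid.Loopless' (M : Matroid α) : Prop := ∀ e ∈ M.E, M.Indep {e}

/-- `U` is the matroid union `M ∨ N`: its independent sets are exactly the unions of an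
independent set of `M` and an independent set of `N`. -/
def IsMatroidUnion (M N U : Matroid α) : Prop :=
  U.E = M.E ∧ ∀ X, U.Indep X ↔ ∃ I J, M.Indep I ∧ N.Indep J ∧ X = I ∪ J

/-- `P` is the matroid intersection `M ∧ N := (M* ∨ N*)*`. -/
def IsMatroidInter (M N P : Matroid α) : Prop :=
  ∃ U, IsMatroidUnion M✶ N✶ U ∧ P = U✶

/-- Contraction of a set in a matroid, defined by duality: `M/A = (M* \ A)*`. -/
def Matroid.contract' (M : Matroid α) (A : Set α) : Matroid α := (M✶ ↾ (M.E \ A))✶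

/-- A cyclic flat: a flat which is the union of the circuits contained in it. -/
def Matroid.CyclicFlat (M : Matroid α) (F : Set α) : Prop :=
  M.IsFlat F ∧ F = M.cyc F

/-- A nested matroid: one whose cyclic flats form a chain under inclusion. -/
def Matroid.Nested (M : Matroid α) : Prop := IsChain (· ⊆ ·) {F | M.CyclicFlat F}

/-! If `e` is in the closure of `cyc F` but not in `cyc F`, then some circuit through `e` lies in
`insert e (cyc F)`, which is contained in the flat `F`; so `e ∈ cyc F` after all. -/

namespace Matroid

variable {M : Matroid α} {C F : Set α}

lemma circuit'_iff_isCircuit : M.Circuit' C ↔ M.IsCircuit C := by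
  rw [isCircuit_iff_forall_ssubset, Circuit']

lemma cyc_subset : M.cyc F ⊆ F :=
  sUnion_subset fun _ hC ↦ hC.2

lemma cyc_subset_ground : M.cyc F ⊆ M.E :=
  sUnion_subset fun _ hC ↦ (circuit'_iff_isCircuit.1 hC.1).subset_ground

lemma IsCircuit.subset_cyc (hC : M.IsCircuit C) (hCF : C ⊆ F) : C ⊆ M.cyc F :=
  subset_sUnion_of_mem ⟨circuit'_iff_isCircuit.2 hC, hCF⟩

lemma IsFlat.closure_cyc_subset (hF : M.IsFlat F) : M.closure (M.cyc F) ⊆ F :=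
  (M.closure_subset_closure cyc_subset).trans hF.closure.subset

end Matroid

theorem cyc_flat_general (M : Matroid α) (F : Set α) (hF : M.IsFlat F) :
    M.IsFlat (M.cyc F) := by
  refine isFlat_iff_closure_eq.2 <|
    (M.subset_closure _ cyc_subset_ground).antisymm' fun e he ↦ by_contra fun he' ↦ ?_
  obtain ⟨C, hCe, hC, heC⟩ := exists_isCircuit_of_mem_closure he he'
  have hCF : C ⊆ F := hCe.trans (insert_subset (hF.closure_cyc_subset he) cyc_subset)
  exact he' (hC.subset_cyc hCF heC)

/-- For a flat `F` of a finite matroid `M`, the union `cyc_M(F)` of all circuits of `M`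
contained in `F` is again a flat of `M`. -/
theorem cyc_flat (M : Matroid α) [M.Finite] (F : Set α) (hF : M.IsFlat F) :
    M.IsFlat (M.cyc F) :=
  cyc_flat_general M F hF
end

section
/- Let M and N be matroids on the same finite ground set E. The spanning sets of the matroid intersection M ∧ N := (M* ∨ N*)* are exactly the sets of the form S ∩ T where S is spanning in M and T is spanning in N. -/
/-! A set is spanning in a matroid exactly when its complement is coindependent, so the spanning
sets of `(M✶ ∨ N✶)✶` are the sets `E \ (I ∪ J)` with `I` coindependent in `M` and `J` in `N`.
By De Morgan these are the intersections `(E \ I) ∩ (E \ J)` of a spanning set of `M` with one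
of `N`. -/

open Matroid Set
open scoped Classical

variable {α : Type*}

namespace Matroid

lemma spanning_iff_exists_coindep {M : Matroid α} {S : Set α} :
    M.Spanning S ↔ ∃ I, M.Coindep I ∧ S = M.E \ I := by
  refine ⟨fun hS => ⟨M.E \ S, (spanning_iff_compl_coindep hS.subset_ground).mp hS, ?_⟩, ?_⟩
  · rw [sdiff_sdiff_cancel_left hS.subset_ground]
  · rintro ⟨I, hI, rfl⟩
    exact hI.compl_spanning

end Matroid

lemma IsMatroidUnion.dual_spanning_iff {M N U : Matroid α}
    (hU : IsMatroidUnion M N U) {X : Set α} :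
    U✶.Spanning X ↔ ∃ I J, M.Indep I ∧ N.Indep J ∧ X = U.E \ (I ∪ J) := by
  simp only [spanning_iff_exists_coindep, dual_coindep_iff, dual_ground, hU.2]
  constructor
  · rintro ⟨_, ⟨I, J, hI, hJ, rfl⟩, rfl⟩
    exact ⟨I, J, hI, hJ, rfl⟩
  · rintro ⟨I, J, hI, hJ, rfl⟩
    exact ⟨_, ⟨I, J, hI, hJ, rfl⟩, rfl⟩

theorem spanning_matroidInter_general (M N P : Matroid α)
    (hE : M.E = N.E) (hP : IsMatroidInter M N P) :
    ∀ X, P.Spanning X ↔ ∃ S T, M.Spanning S ∧ N.Spanning T ∧ X = S ∩ T := by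
  obtain ⟨U, hU, rfl⟩ := hP
  intro X
  simp only [hU.dual_spanning_iff, spanning_iff_exists_coindep, hU.1, dual_ground]
  constructor
  · rintro ⟨I, J, hI, hJ, rfl⟩
    exact ⟨_, _, ⟨I, hI, rfl⟩, ⟨J, hJ, rfl⟩, by rw [← hE, sdiff_inter_sdiff]⟩
  · rintro ⟨_, _, ⟨I, hI, rfl⟩, ⟨J, hJ, rfl⟩, rfl⟩
    exact ⟨I, J, hI, hJ, by rw [← hE, sdiff_inter_sdiff]⟩

/-- The spanning sets of the matroid intersection `M ∧ N := (M* ∨ N*)*` of two matroids on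
the same finite ground set are exactly the sets `S ∩ T` with `S` spanning in `M` and `T`
spanning in `N`. -/
theorem spanning_matroidInter (M N P : Matroid α) [M.Finite] [N.Finite]
    (hE : M.E = N.E) (hP : IsMatroidInter M N P) :
    ∀ X, P.Spanning X ↔ ∃ S T, M.Spanning S ∧ N.Spanning T ∧ X = S ∩ T :=
  spanning_matroidInter_general M N P hE hP
end

section
/- Let M and N be matroids on the same finite ground set E. Then the matroid intersection M ∧ N := (M* ∨ N*)* is a quotient of M, i.e., every flat of M ∧ N is a flat of M. -/
open Matroid Set
open scoped Classical

variable {α : Type*}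

/-!
If `M.closure X ⊆ Q.closure X` for all `X`, then every flat of `Q` is a flat of `M`. For `U = M✶ ∨ N✶` one has `U.closure X ⊆ M✶.closure X`: adding to a
`U`-basis `I ∪ J` of `X` an element outside `M✶.closure I` keeps it `U`-independent. Closure
containment reverses under duality, because `e ∈ M.closure X \ X` exactly when
`e ∉ M✶.closure (M.E \ X \ {e})`. Hence `M.closure X ⊆ U✶.closure X`.
-/

namespace Matroid

/-- Both sides say that `e` is a loop of `M ／ X`, i.e. a coloop of `M✶ ＼ X`. -/
lemma mem_closure_and_notMem_iff_notMem_dual_closure (M : Matroid α) (X : Set α) (e : α) :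
    e ∈ M.closure X ∧ e ∉ X ↔ e ∉ M✶.closure ((M.E \ X) \ {e}) ∧ e ∈ M.E ∧ e ∉ X := by
  rw [← contract_isLoop_iff_mem_closure, ← dual_isColoop_iff_isLoop, dual_contract,
    delete_isColoop_iff, dual_ground]

lemma dual_closure_subset_of_closure_subset {M N : Matroid α} (hE : M.E = N.E)
    (h : ∀ X, N.closure X ⊆ M.closure X) (X : Set α) : M✶.closure X ⊆ N✶.closure X := by
  intro e he
  by_contra heN
  have heX : e ∉ X := fun heX ↦
    heN (N✶.mem_closure_of_mem' heX (hE ▸ M✶.closure_subset_ground X he))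
  obtain ⟨heM, heE, -⟩ :=
    (M✶.mem_closure_and_notMem_iff_notMem_dual_closure X e).1 ⟨he, heX⟩
  rw [dual_dual, dual_ground] at heM
  refine heN ((N✶.mem_closure_and_notMem_iff_notMem_dual_closure X e).2 ⟨?_, hE ▸ heE, heX⟩).1
  rw [dual_dual, dual_ground, ← hE]
  exact fun he' ↦ heM (h _ he')

lemma IsFlat.of_closure_subset {M Q : Matroid α} (hE : M.E = Q.E)
    (h : ∀ X, M.closure X ⊆ Q.closure X) {F : Set α} (hF : Q.IsFlat F) : M.IsFlat F := by
  refine isFlat_iff_closure_eq.2 ((hF.closure ▸ h F).antisymm (M.subset_closure F ?_))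
  exact hE ▸ hF.subset_ground

end Matroid

lemma IsMatroidUnion.closure_subset_left {M N U : Matroid α} (hU : IsMatroidUnion M N U)
    (X : Set α) : U.closure X ⊆ M.closure X := by
  intro e he
  by_contra heM
  have heE : e ∈ M.E := hU.1 ▸ mem_ground_of_mem_closure he
  have heX : e ∉ X := fun heX ↦ heM (M.mem_closure_of_mem' heX)
  obtain ⟨W, hW⟩ := U.exists_isBasis' X
  obtain ⟨I, J, hI, hJ, rfl⟩ := (hU.2 W).1 hW.indep
  have hIX : I ⊆ X := subset_union_left.trans hW.subset
  have heI : M.Indep (insert e I) := (hI.insert_indep_iff_of_notMem fun h ↦ heX (hIX h)).2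
    ⟨heE, fun h ↦ heM (M.closure_subset_closure hIX h)⟩
  have hIJe : U.Indep (insert e (I ∪ J)) := (hU.2 _).2 ⟨_, J, heI, hJ, (insert_union ..).symm⟩
  rw [← hW.closure_eq_closure] at he
  exact (hW.indep.notMem_closure_iff_of_notMem (fun h ↦ heX (hW.subset h))
    (hU.1 ▸ heE)).2 hIJe he

theorem matroidInter_quotient_general (M N P : Matroid α)
    (hP : IsMatroidInter M N P) :
    ∀ F, P.IsFlat F → M.IsFlat F := by
  obtain ⟨U, hU, rfl⟩ := hP
  have hcl : ∀ X, M.closure X ⊆ U✶.closure X := by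
    simpa using dual_closure_subset_of_closure_subset hU.1.symm hU.closure_subset_left
  exact fun F ↦ IsFlat.of_closure_subset (M := M) (Q := U✶) hU.1.symm hcl

/-- The matroid intersection `M ∧ N := (M* ∨ N*)*` of two matroids on the same finite
ground set is a quotient of `M`: every flat of `M ∧ N` is a flat of `M`. -/
theorem matroidInter_quotient (M N P : Matroid α) [M.Finite] [N.Finite]
    (hE : M.E = N.E) (hP : IsMatroidInter M N P) :
    ∀ F, P.IsFlat F → M.IsFlat F :=
  matroidInter_quotient_general M N P hP
end

section
/- Matroid intersection commutes with contraction: for matroids M, N on ground set E and any A ⊆ E, (M ∧ N)/A = (M/A) ∧ (N/A). -/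
open Matroid Set
open scoped Classical

variable {α : Type*}

/-! Taking duals, contraction becomes restriction, and matroid union commutes with
restriction to any set; the matroid union is unique, so the two sides agree. -/

theorem Matroid.dual_contract' (M : Matroid α) (A : Set α) :
    (M.contract' A)✶ = M✶ ↾ (M.E \ A) :=
  dual_dual _

theorem IsMatroidUnion.unique {M N U V : Matroid α} (hU : IsMatroidUnion M N U)
    (hV : IsMatroidUnion M N V) : U = V :=
  ext_indep (hU.1.trans hV.1.symm) fun I _ ↦ by rw [hU.2, hV.2]

theorem IsMatroidUnion.restrict {M N U : Matroid α} (hU : IsMatroidUnion M N U) (X : Set α) :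
    IsMatroidUnion (M ↾ X) (N ↾ X) (U ↾ X) := by
  refine ⟨rfl, fun Y ↦ ?_⟩
  simp only [restrict_indep_iff, hU.2]
  constructor
  · rintro ⟨⟨I, J, hI, hJ, rfl⟩, hIJ⟩
    exact ⟨I, J, ⟨hI, subset_union_left.trans hIJ⟩, ⟨hJ, subset_union_right.trans hIJ⟩, rfl⟩
  · rintro ⟨I, J, ⟨hI, hIX⟩, ⟨hJ, hJX⟩, rfl⟩
    exact ⟨⟨I, J, hI, hJ, rfl⟩, union_subset hIX hJX⟩

theorem matroidInter_contract_general (M N P Q : Matroid α) (A : Set α)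
    (hE : M.E = N.E)
    (hP : IsMatroidInter M N P)
    (hQ : IsMatroidInter (M.contract' A) (N.contract' A) Q) :
    P.contract' A = Q := by
  obtain ⟨U, hU, rfl⟩ := hP
  obtain ⟨V, hV, rfl⟩ := hQ
  have hUE : U.E = M.E := by simpa using hU.1
  have hUV : U ↾ (M.E \ A) = V := by
    refine (hU.restrict (M.E \ A)).unique ?_
    rwa [dual_contract', dual_contract', ← hE] at hV
  rw [Matroid.contract', dual_dual, dual_ground, hUE, hUV]

/-- Matroid intersection commutes with contraction: for matroids `M`, `N` on the same
ground set `E` and any `A ⊆ E`, `(M ∧ N)/A = (M/A) ∧ (N/A)`. -/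
theorem matroidInter_contract (M N P Q : Matroid α) (A : Set α)
    (hE : M.E = N.E) (hA : A ⊆ M.E)
    (hP : IsMatroidInter M N P)
    (hQ : IsMatroidInter (M.contract' A) (N.contract' A) Q) :
    P.contract' A = Q :=
  matroidInter_contract_general M N P Q A hE hP hQ
end

section
/- Let E be a finite set of size n, and for G ⊆ E with |G| ≤ n−2 let H_G := U_{|G|,G} ⊕ U_{|G^c|−1,G^c} be the corank-one matroid with coloop set G. Given a chain G_1 ⊊ ⋯ ⊊ G_k with |G_k| ≤ n−2, the bases of the matroid intersection M_G := H_{G_1} ∧ ⋯ ∧ H_{G_k} are exactly the (n−k)-element subsets B ⊆ E satisfying |G_i \ B| ≤ i−1 for all i = 1,…,k. -/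
open Matroid Set
open scoped Classical

variable {α : Type*}

/-- `U` is the uniform matroid of rank `r` on the ground set `S`: its bases are exactly the
`r`-element subsets of `S`. -/
def IsUnifOn (S : Set α) (r : ℕ) (U : Matroid α) : Prop :=
  U.E = S ∧ ∀ B, U.IsBase B ↔ B ⊆ S ∧ B.encard = r

/-- `H` is the corank-one matroid `H_G := U_{|G|,G} ⊕ U_{|Gᶜ|-1,Gᶜ}` on the ground set
`univ` whose set of coloops is `G`. -/
def IsHG (G : Set α) (H : Matroid α) : Prop :=
  ∃ (U' : Matroid α) (hd : Disjoint (Matroid.freeOn G).E U'.E),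
    IsUnifOn Gᶜ (Gᶜ.ncard - 1) U' ∧ H = (Matroid.freeOn G).disjointSum U' hd

/-- `P` is the iterated matroid intersection of a list of matroids (the empty intersection
being the free matroid `U_{n,n}` on the ground set `univ`). -/
def IsFoldInter : List (Matroid α) → Matroid α → Prop
  | [], P => P = Matroid.freeOn Set.univ
  | M :: l, P => ∃ Q, IsFoldInter l Q ∧ IsMatroidInter M Q P

/-! The dual of `H_G` is `U_{0,G} ⊕ U_{1,Gᶜ}`, and duality turns the intersection into a union,
so the independent sets of `M_𝒢✶` are the partial transversals of `(G_1ᶜ, …, G_kᶜ)`. Because the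
`G_i` form a chain, Hall's condition for such a transversal `X` reduces to `|X| ≤ k` and
`|X ∩ G_i| ≤ i - 1`, and the size bound on `G_k` lets one choose a transversal of size `k`
greedily. Hence the bases of `M_𝒢✶` are the `k`-sets satisfying these bounds, and the bases of
`M_𝒢` are their complements. -/

section Matroid

variable {M : Matroid α} {G S X B : Set α} {r k : ℕ}

lemma Matroid.isBase_iff_indep_ncard_eq [M.RankFinite] (hle : ∀ I, M.Indep I → I.ncard ≤ k)
    (hex : ∃ I, M.Indep I ∧ I.ncard = k) : M.IsBase B ↔ M.Indep B ∧ B.ncard = k := by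
  refine ⟨fun hB => ⟨hB.indep, (hle B hB.indep).antisymm ?_⟩, fun ⟨hB, hBk⟩ => ?_⟩
  · obtain ⟨I, hI, rfl⟩ := hex
    obtain ⟨B', hB', hIB'⟩ := hI.exists_isBase_superset
    rw [hB.ncard_eq_ncard_of_isBase hB']
    exact ncard_le_ncard hIB' hB'.finite
  · exact hB.isBase_of_maximal fun J hJ hBJ =>
      eq_of_subset_of_ncard_le hBJ (hBk ▸ hle J hJ) hJ.finite

lemma Matroid.freeOn_disjointSum_dual_indep_iff {N : Matroid α}
    (hd : Disjoint (freeOn G).E N.E) : ((freeOn G).disjointSum N hd)✶.Indep X ↔ N✶.Indep X := by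
  rw [freeOn_ground] at hd
  simp only [dual_indep_iff_exists', disjointSum_ground_eq, disjointSum_isBase_iff, freeOn_ground,
    freeOn_isBase_iff]
  constructor
  · rintro ⟨hXE, B, ⟨hBG, hBN, -⟩, hXB⟩
    have hXN : X ⊆ N.E := fun x hx => (hXE hx).resolve_left fun hxG =>
      hXB.notMem_of_mem_left hx (hBG.symm ▸ hxG : x ∈ B ∩ G).1
    exact ⟨hXN, B ∩ N.E, hBN, hXB.mono_right inter_subset_left⟩
  · rintro ⟨hXN, B, hB, hXB⟩
    refine ⟨hXN.trans subset_union_right, G ∪ B,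
      ⟨union_inter_cancel_left, ?_, union_subset_union_right _ hB.subset_ground⟩,
      disjoint_union_right.2 ⟨(hd.mono_right hXN).symm, hXB⟩⟩
    rw [union_inter_distrib_right, hd.inter_eq, empty_union, inter_eq_left.2 hB.subset_ground]
    exact hB

lemma IsUnifOn.dual_indep_iff {U : Matroid α} (hU : IsUnifOn S r U) (hS : S.Finite) :
    U✶.Indep X ↔ X ⊆ S ∧ X.ncard + r ≤ S.ncard := by
  rw [dual_indep_iff_exists', hU.1]
  refine and_congr_right fun hXS => ?_
  simp only [hU.2]
  have hXS' : X.ncard ≤ S.ncard := ncard_le_ncard hXS hS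
  have hdiff : (S \ X).ncard = S.ncard - X.ncard := ncard_sdiff hXS (hS.subset hXS)
  constructor
  · rintro ⟨B, ⟨hBS, hBr⟩, hXB⟩
    have hBr' : B.ncard = r := by
      rw [← (hS.subset hBS).cast_ncard_eq] at hBr
      exact_mod_cast hBr
    have := ncard_le_ncard (subset_sdiff.2 ⟨hBS, hXB.symm⟩) (hS.sdiff (t := X))
    omega
  · intro hr
    obtain ⟨B, hBX, hBr⟩ := exists_subset_encard_eq (s := S \ X) (k := r)
      (by rw [← (hS.sdiff (t := X)).cast_ncard_eq]; exact_mod_cast (by omega : r ≤ (S \ X).ncard))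
    exact ⟨B, ⟨hBX.trans sdiff_subset, hBr⟩, disjoint_sdiff_right.mono_right hBX⟩

lemma IsHG.ground_eq {H : Matroid α} (h : IsHG G H) : H.E = univ := by
  obtain ⟨U, hd, ⟨hUE, -⟩, rfl⟩ := h
  simp [hUE]

lemma IsHG.dual_indep_iff [Finite α] {H : Matroid α} (h : IsHG G H) :
    H✶.Indep X ↔ X ⊆ Gᶜ ∧ X.ncard ≤ 1 := by
  obtain ⟨U, hd, hU, rfl⟩ := h
  rw [freeOn_disjointSum_dual_indep_iff, hU.dual_indep_iff (toFinite _)]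
  exact and_congr_right fun hX => by have := ncard_le_ncard hX; omega

lemma IsMatroidInter.ground_eq {N P : Matroid α} (h : IsMatroidInter M N P) : P.E = M.E := by
  obtain ⟨U, ⟨hUE, -⟩, rfl⟩ := h
  simp [hUE]

lemma IsMatroidInter.dual_indep_iff {N P : Matroid α} (h : IsMatroidInter M N P) :
    P✶.Indep X ↔ ∃ I J, M✶.Indep I ∧ N✶.Indep J ∧ X = I ∪ J := by
  obtain ⟨U, ⟨-, hU⟩, rfl⟩ := h
  rw [dual_dual, hU]

lemma IsFoldInter.ground_eq {l : List (Matroid α)} {P : Matroid α}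
    (hl : ∀ M ∈ l, M.E = univ) (hP : IsFoldInter l P) : P.E = univ := by
  cases l with
  | nil => rw [show P = freeOn univ from hP, freeOn_ground]
  | cons M l =>
    obtain ⟨Q, -, hMQP⟩ := hP
    exact hMQP.ground_eq.trans (hl M List.mem_cons_self)

end Matroid

/-- For a chain `G`, Hall's condition for `X` to be a partial transversal of the complements
`(G 0)ᶜ, …, (G (k - 1))ᶜ`. -/
def HallCondition (k : ℕ) (G : ℕ → Set α) (X : Set α) : Prop :=
  X.ncard ≤ k ∧ ∀ i < k, (X ∩ G i).ncard ≤ i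

section Chain

variable {G : ℕ → Set α} {k : ℕ} {X : Set α}

lemma MonotoneOn.comp_succ_Iio {β : Type*} [Preorder β] {f : ℕ → β}
    (hf : MonotoneOn f (Iio (k + 1))) : MonotoneOn (fun i => f (i + 1)) (Iio k) := fun i hi j hj hij =>
  hf (by simp only [mem_Iio] at hi ⊢; omega) (by simp only [mem_Iio] at hj ⊢; omega) (by omega)

lemma StrictMonoOn.ncard_add_le [Finite α] (hG : StrictMonoOn G (Iio k)) {i j : ℕ} (hij : i ≤ j)
    (hj : j < k) : (G i).ncard + (j - i) ≤ (G j).ncard := by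
  induction j, hij using Nat.le_induction with
  | base => simp
  | succ j hij ih =>
    have := ncard_lt_ncard (hG (by simp only [mem_Iio]; omega) hj (lt_add_one j)) (toFinite _)
    have := ih (by omega)
    omega

lemma exists_mem_forall_mem_of_monotoneOn (hG : MonotoneOn G (Iio k)) (hX : X.Nonempty) :
    ∃ e ∈ X, ∀ i < k, (X ∩ G i).Nonempty → e ∈ G i := by
  by_cases h : ∃ j < k, (X ∩ G j).Nonempty
  · obtain ⟨hjk, e, heX, heG⟩ := Nat.find_spec h
    exact ⟨e, heX, fun i hi hXi => hG hjk hi (Nat.find_min' h ⟨hi, hXi⟩) heG⟩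
  · obtain ⟨e, heX⟩ := hX
    exact ⟨e, heX, fun i hi hXi => (h ⟨i, hi, hXi⟩).elim⟩

lemma HallCondition.union [Finite α] (hG : MonotoneOn G (Iio (k + 1))) {I Y : Set α}
    (hI : I ⊆ (G 0)ᶜ) (hI1 : I.ncard ≤ 1) (hY : HallCondition k (fun i => G (i + 1)) Y) :
    HallCondition (k + 1) G (I ∪ Y) := by
  obtain ⟨hYk, hYG⟩ := hY
  refine ⟨(ncard_union_le I Y).trans (by omega), fun i hi => ?_⟩
  rw [union_inter_distrib_right]
  refine (ncard_union_le _ _).trans ?_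
  rcases i with _ | i
  · have hI0 : I ∩ G 0 = ∅ := disjoint_iff_inter_eq_empty.1 (subset_compl_iff_disjoint_right.1 hI)
    have hY0 : (Y ∩ G 0).ncard ≤ 0 := by
      rcases k.eq_zero_or_pos with rfl | hk
      · exact (ncard_le_ncard inter_subset_left).trans hYk
      · exact (ncard_le_ncard (inter_subset_inter_right Y
          (hG (by simp) (by simp only [mem_Iio]; omega) zero_le_one))).trans (hYG 0 hk)
    rw [hI0, ncard_empty]
    omega
  · have := ncard_le_ncard (inter_subset_left : I ∩ G (i + 1) ⊆ I)
    have : (Y ∩ G (i + 1)).ncard ≤ i := hYG i (by omega)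
    omega

/-- Peeling off the element of `X` that enters the chain first. -/
lemma HallCondition.exists_union [Finite α] (hG : MonotoneOn G (Iio (k + 1)))
    (hX : HallCondition (k + 1) G X) : ∃ I Y, (I ⊆ (G 0)ᶜ ∧ I.ncard ≤ 1) ∧
      HallCondition k (fun i => G (i + 1)) Y ∧ X = I ∪ Y := by
  obtain ⟨hXk, hXG⟩ := hX
  rcases X.eq_empty_or_nonempty with rfl | hne
  · exact ⟨∅, ∅, by simp, by simp [HallCondition], by simp⟩
  obtain ⟨e, heX, he⟩ := exists_mem_forall_mem_of_monotoneOn hG hne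
  have heG : e ∉ G 0 := fun h => by
    have := (ncard_pos (toFinite _)).2 (show (X ∩ G 0).Nonempty from ⟨e, heX, h⟩)
    have := hXG 0 (by omega)
    omega
  refine ⟨{e}, X \ {e}, ⟨singleton_subset_iff.2 heG, (ncard_singleton e).le⟩, ⟨?_, fun i hi => ?_⟩,
    (union_sdiff_cancel (singleton_subset_iff.2 heX)).symm⟩
  · rw [ncard_sdiff_singleton_of_mem heX]
    omega
  · rw [sdiff_inter_right_comm]
    by_cases hXi : (X ∩ G (i + 1)).Nonempty
    · rw [ncard_sdiff_singleton_of_mem (show e ∈ X ∩ G (i + 1) from ⟨heX, he _ (by omega) hXi⟩)]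
      have := hXG (i + 1) (by omega)
      omega
    · simp [not_nonempty_iff_eq_empty.1 hXi]

lemma hallCondition_succ_iff [Finite α] (hG : MonotoneOn G (Iio (k + 1))) :
    HallCondition (k + 1) G X ↔ ∃ I Y, (I ⊆ (G 0)ᶜ ∧ I.ncard ≤ 1) ∧
      HallCondition k (fun i => G (i + 1)) Y ∧ X = I ∪ Y := by
  refine ⟨HallCondition.exists_union hG, ?_⟩
  rintro ⟨I, Y, ⟨hI, hI1⟩, hY, rfl⟩
  exact hY.union hG hI hI1

lemma exists_hallCondition_ncard_eq [Fintype α] (hG : MonotoneOn G (Iio k))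
    (hcard : ∀ i < k, (G i).ncard + (k - i) ≤ Fintype.card α) :
    ∃ X, X.ncard = k ∧ HallCondition k G X := by
  induction k generalizing G with
  | zero => exact ⟨∅, by simp, by simp [HallCondition]⟩
  | succ k ih =>
    obtain ⟨Y, hYk, hY⟩ := ih hG.comp_succ_Iio fun i hi => by
      have := hcard (i + 1) (by omega)
      omega
    have hne : G 0 ∪ Y ≠ univ := by
      intro h
      have hunion := ncard_union_le (G 0) Y
      rw [h, ncard_univ, Nat.card_eq_fintype_card] at hunion
      have := hcard 0 (by omega)
      omega
    obtain ⟨e, he⟩ := (ne_univ_iff_exists_notMem _).1 hne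
    rw [mem_union, not_or] at he
    refine ⟨insert e Y, by rw [ncard_insert_of_notMem he.2]; omega, ?_⟩
    rw [← singleton_union]
    exact hY.union hG (singleton_subset_iff.2 he.1) (ncard_singleton e).le

end Chain

lemma IsFoldInter.dual_indep_iff [Finite α] {k : ℕ} {G : ℕ → Set α} {H : ℕ → Matroid α}
    (hG : MonotoneOn G (Iio k)) (hH : ∀ i < k, IsHG (G i) (H i)) {P : Matroid α}
    (hP : IsFoldInter (List.ofFn fun i : Fin k => H i) P) (X : Set α) :
    P✶.Indep X ↔ HallCondition k G X := by
  induction k generalizing G H P X with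
  | zero =>
    rw [List.ofFn_zero, IsFoldInter] at hP
    simp only [hP, freeOn_dual_eq, loopyOn_indep_iff, HallCondition, and_true,
      nonpos_iff_eq_zero, not_lt_zero, false_imp_iff, implies_true]
    exact (ncard_eq_zero (toFinite X)).symm
  | succ k ih =>
    rw [List.ofFn_succ] at hP
    obtain ⟨Q, hQ, hPQ⟩ := hP
    simp only [Fin.val_succ] at hQ
    simp only [Fin.val_zero] at hPQ
    simp only [hPQ.dual_indep_iff, (hH 0 (by omega)).dual_indep_iff,
      ih hG.comp_succ_Iio (fun i hi => hH (i + 1) (by omega)) hQ, hallCondition_succ_iff hG]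

theorem chainProduct_base_iff_general [Fintype α] {k : ℕ} (G : ℕ → Set α)
    (hchain : ∀ i j, i < j → j < k → G i ⊂ G j)
    (hsize : (G (k - 1)).ncard ≤ Fintype.card α - 2)
    (H : ℕ → Matroid α) (hH : ∀ i < k, IsHG (G i) (H i))
    (P : Matroid α) (hP : IsFoldInter (List.ofFn fun i : Fin k => H i) P) :
    ∀ B, P.IsBase B ↔ B.ncard = Fintype.card α - k ∧ ∀ i < k, (G i \ B).ncard ≤ i := by
  intro B
  rcases isEmpty_or_nonempty α with hα | hα
  -- Here `0 - 2 = 0` makes `hsize` useless, but every set is `∅`.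
  · obtain ⟨B₀, hB₀⟩ := P.exists_isBase
    rw [eq_empty_of_isEmpty B]
    simpa [eq_empty_of_isEmpty] using hB₀
  have hG : StrictMonoOn G (Iio k) := fun i hi j hj hij => hchain i j hij hj
  have hindep := hP.dual_indep_iff hG.monotoneOn hH
  obtain ⟨X, hXk, hX⟩ := exists_hallCondition_ncard_eq hG.monotoneOn fun i hi => by
    have := hG.ncard_add_le (Nat.le_sub_one_of_lt hi) (by omega)
    have := Fintype.card_pos (α := α)
    omega
  have hbase (Y : Set α) : P✶.IsBase Y ↔ Y.ncard = k ∧ ∀ i < k, (Y ∩ G i).ncard ≤ i := by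
    rw [isBase_iff_indep_ncard_eq (fun I hI => ((hindep I).1 hI).1) ⟨X, (hindep X).2 hX, hXk⟩,
      hindep, HallCondition, and_comm]
    exact and_congr_right fun hY => by simp [hY]
  have hE : P.E = univ := hP.ground_eq (by
    simp only [List.mem_ofFn, forall_exists_index, forall_apply_eq_imp_iff]
    exact fun i => (hH i i.2).ground_eq)
  have hcompl : Bᶜ.ncard = k ↔ B.ncard = Fintype.card α - k := by
    have hsum := ncard_add_ncard_compl B
    have hkn : X.ncard ≤ Nat.card α := ncard_univ α ▸ ncard_le_ncard (subset_univ X)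
    rw [Nat.card_eq_fintype_card] at hsum hkn
    omega
  rw [← dual_dual P, dual_isBase_iff', dual_ground, hE, ← compl_eq_univ_sdiff, hbase, hcompl]
  simp [sdiff_eq_compl_inter]

/-- The bases of the chain product `M_𝒢 = H_{G_1} ∧ ⋯ ∧ H_{G_k}` for a chain
`G_1 ⊊ ⋯ ⊊ G_k` with `|G_k| ≤ n - 2` (here `0`-indexed: `G 0 ⊊ ⋯ ⊊ G (k-1)`) are exactly
the `(n-k)`-element sets `B` with `|G_i \ B| ≤ i - 1` for all `i = 1, …, k`. -/
theorem chainProduct_base_iff [Fintype α] {k : ℕ} (hk : 1 ≤ k) (G : ℕ → Set α)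
    (hchain : ∀ i j, i < j → j < k → G i ⊂ G j)
    (hsize : (G (k - 1)).ncard ≤ Fintype.card α - 2)
    (H : ℕ → Matroid α) (hH : ∀ i < k, IsHG (G i) (H i))
    (P : Matroid α) (hP : IsFoldInter (List.ofFn fun i : Fin k => H i) P) :
    ∀ B, P.IsBase B ↔ B.ncard = Fintype.card α - k ∧ ∀ i < k, (G i \ B).ncard ≤ i :=
  chainProduct_base_iff_general G hchain hsize H hH P hP
end

section
/- Let M be a matroid of rank at least 2 on finite ground set E and H_G a corank-one matroid (with coloop set G) such that M ∧ H_G is loopfree. Let F be a nonempty set that is a flat of both M and M ∧ H_G. Then rank_{M∧H_G}(F) = rank_M(F) − 1 if F ∪ G = E, and rank_{M∧H_G}(F) = rank_M(F) otherwise. -/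
open Matroid Set
open scoped Classical

variable {α : Type*}

/-! By definition `P = U✶` with `U = M✶ ∨ H✶`, and `H✶` is the rank-one uniform matroid on `Gᶜ`.
Hence `r_U(X)` exceeds `r_{M✶}(X)` by one exactly when some `e ∈ X ∩ Gᶜ` satisfies
`r_{M✶}(X - e) = r_{M✶}(X)`, and by zero otherwise. For `X = E` this jump is forced by `P` being
loopfree; for `X = E - F` it happens iff `F ∪ G ≠ E`, because `F` is a flat of `M`, so that
`r_{M✶}(E - F - e) = r_{M✶}(E - F)` for every `e ∉ F`. The dual rank formula
`r_{N✶}(F) + r(N) = r_N(E - F) + |F|`, applied to `N = U` and `N = M✶`, converts the two jumps into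
the claimed difference of ranks. -/

/-- `U = N ∨ U_{1,S}`, provided `S` is nonempty (for `S = ∅` no set is `U`-independent). -/
def IsUnionUnifOneOn (N : Matroid α) (S : Set α) (U : Matroid α) : Prop :=
  ∀ X, U.Indep X ↔ ∃ e ∈ S, N.Indep (X \ {e})

namespace IsUnionUnifOneOn

variable {N U : Matroid α} {S X B : Set α} {e : α}

lemma eRk_le_add_one (hU : IsUnionUnifOneOn N S U) (X : Set α) : U.eRk X ≤ N.eRk X + 1 := by
  refine eRk_le_iff.2 fun K hKX hK => ?_
  obtain ⟨e, -, hKe⟩ := (hU K).1 hK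
  calc K.encard ≤ (K \ {e}).encard + 1 := by
        simpa using encard_le_encard_sdiff_add_encard K {e}
    _ ≤ N.eRk X + 1 := by grw [hKe.encard_le_eRk_of_subset (sdiff_subset.trans hKX)]

lemma eRk_eq_of_disjoint (hU : IsUnionUnifOneOn N S U) (hS : S.Nonempty) (hXS : Disjoint X S) :
    U.eRk X = N.eRk X := by
  refine le_antisymm (eRk_le_iff.2 fun K hKX hK => ?_) (eRk_le_iff.2 fun I hIX hI => ?_)
  · obtain ⟨e, heS, hKe⟩ := (hU K).1 hK
    have heK : e ∉ K := fun heK => hXS.notMem_of_mem_right heS (hKX heK)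
    rw [sdiff_singleton_eq_self heK] at hKe
    exact hKe.encard_le_eRk_of_subset hKX
  · obtain ⟨e, heS⟩ := hS
    exact ((hU I).2 ⟨e, heS, hI.subset sdiff_subset⟩).encard_le_eRk_of_subset hIX

lemma eRk_eq_add_one (hU : IsUnionUnifOneOn N S U) (heX : e ∈ X) (heS : e ∈ S)
    (hr : N.eRk (X \ {e}) = N.eRk X) : U.eRk X = N.eRk X + 1 := by
  refine le_antisymm (hU.eRk_le_add_one X) ?_
  obtain ⟨I, hI⟩ := N.exists_isBasis' (X \ {e})
  have heI : e ∉ I := fun heI => (hI.subset heI).2 rfl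
  have hIe : U.Indep (insert e I) :=
    (hU _).2 ⟨e, heS, by rw [insert_sdiff_self_of_notMem heI]; exact hI.indep⟩
  calc N.eRk X + 1 = (insert e I).encard := by
        rw [← hr, ← hI.encard_eq_eRk, encard_insert_of_notMem heI]
    _ ≤ U.eRk X := hIe.encard_le_eRk_of_subset (insert_subset heX (hI.subset.trans sdiff_subset))

lemma exists_isBase_notMem (hU : IsUnionUnifOneOn N S U) (hB : U.IsBase B) (heS : e ∈ S)
    (heB : e ∉ B) : ∃ B₀, N.IsBase B₀ ∧ ∃ f ∈ S, f ∉ B₀ := by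
  by_contra! hSB
  obtain ⟨f, hfS, hBf⟩ := (hU B).1 hB.indep
  obtain ⟨B₀, hB₀, hBfB₀⟩ := hBf.exists_isBase_superset
  have hNB : N.Indep B := hB₀.indep.subset <|
    (subset_insert_sdiff_singleton f B).trans (insert_subset (hSB B₀ hB₀ f hfS) hBfB₀)
  have hUeB : U.Indep (insert e B) :=
    (hU _).2 ⟨e, heS, hNB.subset (by simp)⟩
  exact heB ((hB.eq_of_subset_indep hUeB (subset_insert e B)) ▸ mem_insert e B)

lemma eRank_eq_add_one (hU : IsUnionUnifOneOn N S U) (hB : U.IsBase B) (heS : e ∈ S)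
    (heB : e ∉ B) : U.eRank = N.eRank + 1 := by
  obtain ⟨B₀, hB₀, f, hfS, hfB₀⟩ := hU.exists_isBase_notMem hB heS heB
  have hr : N.eRk (univ \ {f}) = N.eRk univ := by
    refine le_antisymm (N.eRk_mono (subset_univ _)) ?_
    rw [eRk_univ_eq, ← hB₀.eRk_eq_eRank]
    exact N.eRk_mono fun x hx => ⟨trivial, fun hxf => hfB₀ (hxf ▸ hx)⟩
  rw [← eRk_univ_eq, ← eRk_univ_eq, hU.eRk_eq_add_one (mem_univ f) hfS hr]

end IsUnionUnifOneOn

lemma IsMatroidUnion.isUnionUnifOneOn {N N' U : Matroid α} {S : Set α}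
    (hU : IsMatroidUnion N N' U) (hN' : ∀ J, N'.Indep J ↔ ∃ e ∈ S, J ⊆ {e}) :
    IsUnionUnifOneOn N S U := by
  intro X
  rw [hU.2]
  constructor
  · rintro ⟨I, J, hI, hJ, rfl⟩
    obtain ⟨e, heS, hJe⟩ := (hN' J).1 hJ
    exact ⟨e, heS, hI.subset fun x ⟨hx, hxe⟩ => hx.resolve_right fun hxJ => hxe (hJe hxJ)⟩
  · rintro ⟨e, heS, hXe⟩
    exact ⟨X \ {e}, X ∩ {e}, hXe, (hN' _).2 ⟨e, heS, inter_subset_right⟩,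
      (sdiff_union_inter X {e}).symm⟩

lemma IsUnifOn.isBase_iff_exists_eq_sdiff_singleton {S B : Set α} {U : Matroid α}
    (hU : IsUnifOn S (S.ncard - 1) U) (hS : S.Nonempty) (hSfin : S.Finite) :
    U.IsBase B ↔ ∃ e ∈ S, B = S \ {e} := by
  have hcard : ((S.ncard - 1 : ℕ) : ℕ∞) + 1 = S.encard := by
    rw [← hSfin.cast_ncard_eq]
    exact_mod_cast Nat.sub_add_cancel ((ncard_pos hSfin).2 hS)
  rw [hU.2]
  constructor
  · rintro ⟨hBS, hB⟩
    have h1 : (S \ B).encard = 1 := by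
      have := encard_sdiff_add_encard_of_subset hBS
      rw [hB, ← hcard, add_comm _ (1 : ℕ∞)] at this
      exact (add_left_inj_of_ne_top (ENat.natCast_ne_top _)).1 this
    obtain ⟨e, he⟩ := encard_eq_one.1 h1
    have heSB : e ∈ S \ B := he ▸ mem_singleton e
    exact ⟨e, heSB.1, by rw [← he, sdiff_sdiff_cancel_left hBS]⟩
  · rintro ⟨e, heS, rfl⟩
    have h := encard_sdiff_singleton_add_one heS
    rw [← hcard] at h
    exact ⟨sdiff_subset, (add_left_inj_of_ne_top ENat.one_ne_top).1 h⟩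

namespace IsHG

variable {G : Set α} {H : Matroid α}

lemma ground_eq_s14 (hH : IsHG G H) : H.E = univ := by
  obtain ⟨U', hd, hU', rfl⟩ := hH
  simp [hU'.1]

lemma isBase_iff [Finite α] (hH : IsHG G H) (hGc : Gᶜ.Nonempty) {B : Set α} :
    H.IsBase B ↔ ∃ e ∈ Gᶜ, B = {e}ᶜ := by
  obtain ⟨U', hd, hU', rfl⟩ := hH
  rw [disjointSum_isBase_iff, freeOn_ground, freeOn_isBase_iff, hU'.1,
    hU'.isBase_iff_exists_eq_sdiff_singleton hGc (toFinite _)]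
  constructor
  · rintro ⟨hBG, ⟨e, heG, hBe⟩, -⟩
    refine ⟨e, heG, ?_⟩
    rw [← inter_union_compl B G, hBG, hBe]
    ext x
    by_cases x ∈ G <;> grind
  · rintro ⟨e, heG, rfl⟩
    refine ⟨?_, ⟨e, heG, ?_⟩, by simp⟩ <;> ext x <;> by_cases x ∈ G <;> grind

lemma dual_indep_iff_s14 [Finite α] (hH : IsHG G H) (hGc : Gᶜ.Nonempty) {J : Set α} :
    H✶.Indep J ↔ ∃ e ∈ Gᶜ, J ⊆ {e} := by
  rw [dual_indep_iff_exists', hH.ground_eq_s14]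
  simp only [subset_univ, true_and, hH.isBase_iff hGc]
  constructor
  · rintro ⟨B, ⟨e, heG, rfl⟩, hJB⟩
    exact ⟨e, heG, disjoint_compl_right_iff_subset.1 hJB⟩
  · rintro ⟨e, heG, hJe⟩
    exact ⟨_, ⟨e, heG, rfl⟩, disjoint_compl_right_iff_subset.2 hJe⟩

end IsHG

namespace Matroid

lemma eRk'_eq_eRk (M : Matroid α) (X : Set α) : M.eRk' X = M.eRk X := by
  refine le_antisymm (iSup₂_le fun I hI => hI.1.encard_le_eRk_of_subset hI.2) ?_
  obtain ⟨I, hI⟩ := M.exists_isBasis' X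
  rw [← hI.encard_eq_eRk]
  exact le_iSup₂_of_le I ⟨hI.indep, hI.subset⟩ le_rfl

variable {M : Matroid α} {X F : Set α} {e : α}

lemma IsFlat.eRk_dual_sdiff_singleton [M.RankFinite] (hF : M.IsFlat F) (he : e ∈ M.E \ F) :
    M✶.eRk ((M.E \ F) \ {e}) = M✶.eRk (M.E \ F) := by
  have hins : M.E \ ((M.E \ F) \ {e}) = insert e F := by
    have := hF.subset_ground
    have := he.1
    ext x; by_cases x = e <;> grind
  have hrk : M.eRk (insert e F) = M.eRk F + 1 := eRk_insert_eq_add_one (by rwa [hF.closure])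
  refine (add_left_inj_of_ne_top (M.eRank_ne_top_iff.2 ‹_›)).1 ?_
  rw [M.eRk_dual_add_eRank _ (sdiff_subset.trans sdiff_subset), M.eRk_dual_add_eRank _ sdiff_subset,
    hins, hrk, sdiff_sdiff_cancel_left hF.subset_ground,
    ← encard_sdiff_singleton_add_one (show e ∈ M.E \ F from he)]
  ring

lemma eRk_dual_add_one_of_eRank_eq_add_one {N U : Matroid α} [N.RankFinite] (hE : U.E = N.E)
    (hr : U.eRank = N.eRank + 1) (hX : X ⊆ N.E) {k : ℕ∞}
    (hk : U.eRk (N.E \ X) = N.eRk (N.E \ X) + k) : U✶.eRk X + 1 = N✶.eRk X + k := by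
  refine (add_left_inj_of_ne_top (N.eRank_ne_top_iff.2 ‹_›)).1 ?_
  calc U✶.eRk X + 1 + N.eRank = U✶.eRk X + U.eRank := by rw [hr]; ring
    _ = N.eRk (N.E \ X) + k + X.encard := by rw [U.eRk_dual_add_eRank X (hE ▸ hX), hE, hk]
    _ = N✶.eRk X + k + N.eRank := by rw [add_right_comm, ← N.eRk_dual_add_eRank X hX]; ring

end Matroid

theorem matroidInter_HG_rank_flat_general [Fintype α] (M H P : Matroid α) (G : Set α)
    (hME : M.E = Set.univ)
    (hG : G.ncard ≤ Fintype.card α - 2) (hH : IsHG G H)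
    (hP : IsMatroidInter M H P) (hPl : P.Loopless')
    (F : Set α) (hFne : F.Nonempty) (hFM : M.IsFlat F) :
    (F ∪ G = Set.univ → P.eRk' F + 1 = M.eRk' F) ∧
      (F ∪ G ≠ Set.univ → P.eRk' F = M.eRk' F) := by
  obtain ⟨U, hU, rfl⟩ := hP
  have hGc : Gᶜ.Nonempty := by
    rw [nonempty_compl]
    rintro rfl
    rw [ncard_univ, Nat.card_eq_fintype_card] at hG
    have := Fintype.card_pos_iff.2 ⟨hFne.some⟩
    omega
  have hUS : IsUnionUnifOneOn M✶ Gᶜ U := hU.isUnionUnifOneOn fun J => hH.dual_indep_iff_s14 hGc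
  have hFE : F ⊆ M✶.E := by simp [hME]
  have hrU : U.eRank = M✶.eRank + 1 := by
    obtain ⟨e, heG⟩ := hGc
    obtain ⟨-, B, hB, heB⟩ := dual_indep_iff_exists'.1 (hPl e (by simp [hU.1, hME]))
    exact hUS.eRank_eq_add_one hB heG (disjoint_singleton_left.1 heB)
  simp only [eRk'_eq_eRk]
  constructor
  · intro hFG
    have hk := hUS.eRk_eq_of_disjoint hGc (X := M✶.E \ F) <|
      disjoint_compl_right_iff_subset.2 fun x hx => (hFG ▸ mem_univ x).resolve_left hx.2
    simpa using eRk_dual_add_one_of_eRank_eq_add_one hU.1 hrU hFE (k := 0) (by rw [hk, add_zero])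
  · intro hFG
    obtain ⟨e, he⟩ := (ne_univ_iff_exists_notMem _).1 hFG
    rw [mem_union, not_or] at he
    have hk := hUS.eRk_eq_add_one (X := M✶.E \ F) ⟨by simp [hME], he.1⟩ he.2
      (by simpa using hFM.eRk_dual_sdiff_singleton ⟨by simp [hME], he.1⟩)
    have := eRk_dual_add_one_of_eRank_eq_add_one hU.1 hrU hFE hk
    rw [dual_dual] at this
    exact (add_left_inj_of_ne_top ENat.one_ne_top).1 this

/-- Let `M` be a matroid of rank at least `2` and `H_G` a corank-one matroid such that
`M ∧ H_G` is loopfree. If `F ≠ ∅` is a flat of both `M` and `M ∧ H_G`, then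
`rank_{M ∧ H_G}(F) = rank_M(F) - 1` if `F ∪ G = E`, and `rank_{M ∧ H_G}(F) = rank_M(F)`
otherwise. -/
theorem matroidInter_HG_rank_flat [Fintype α] (M H P : Matroid α) (G : Set α)
    (hME : M.E = Set.univ) (hMr : (2 : ℕ∞) ≤ M.rk')
    (hG : G.ncard ≤ Fintype.card α - 2) (hH : IsHG G H)
    (hP : IsMatroidInter M H P) (hPl : P.Loopless')
    (F : Set α) (hFne : F.Nonempty) (hFM : M.IsFlat F) (hFP : P.IsFlat F) :
    (F ∪ G = Set.univ → P.eRk' F + 1 = M.eRk' F) ∧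
      (F ∪ G ≠ Set.univ → P.eRk' F = M.eRk' F) :=
  matroidInter_HG_rank_flat_general M H P G hME hG hH hP hPl F hFne hFM
end

section
/- Define numbers N_{r,n} by N_{1,m} = 1 for m ≥ 0, N_{r,n} = 0 when r > n ≥ 1 or r ≤ 0 or n < 0 (except N_{1,0}=1), and the recursion N_{r,n} = ∑_{k≥1} ∑_{s≥k+1} C(n,s) N_{r−k,n−s} for r > 1. Then the exponential generating function ∑_{n≥0} ∑_{r≥0} N_{r+1,n} x^r t^n / n! equals (x−1)/(x − e^{(x−1)t}). -/
/-!
Put `A_n(x) = ∑_r N_{r+1,n} x^r`. Multiplying the recursion by `x^r` and summing over `r`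
gives `A_n = 1 + ∑_{1 ≤ k < s ≤ n} C(n,s) x^k A_{n-s}`; summing the geometric series in `k`
turns this into `∑_s C(n,s) (x - x^s) A_{n-s} = x - 1`. This is the coefficient identity of
`F(t) (x e^t - e^{xt}) = (x - 1) e^t` for `F = ∑ A_n t^n / n!`, and
`x e^t - e^{xt} = e^t (x - e^{(x-1)t})`, so cancelling `e^t` gives the theorem.
-/

open Finset PowerSeries
open scoped Nat

theorem finsum_mem_Ici_eq_sum_Icc {M : Type*} [AddCommMonoid M] {f : ℕ → M} {a n : ℕ}
    (hf : ∀ s, n < s → f s = 0) : ∑ᶠ s ∈ Set.Ici a, f s = ∑ s ∈ Icc a n, f s := by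
  refine finsum_mem_eq_sum_of_subset f (fun s ⟨hs, hfs⟩ => ?_)
    (by simp [Set.Icc_subset_Ici_self])
  exact mem_Icc.2 ⟨hs, not_lt.1 fun h => hfs (hf s h)⟩

section ExponentialGeneratingFunctions

variable {K : Type*} [Field K] [CharZero K]

theorem mk_div_factorial_mul_mk_div_factorial (a b : ℕ → K) :
    mk (fun n => a n / n !) * mk (fun n => b n / n !) =
      mk fun n => (∑ k ∈ range (n + 1), n.choose k * a k * b (n - k)) / n ! := by
  ext n
  rw [coeff_mul, Nat.sum_antidiagonal_eq_sum_range_succ_mk, coeff_mk, sum_div]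
  refine sum_congr rfl fun k hk => ?_
  rw [coeff_mk, coeff_mk, Nat.cast_choose K (mem_range_succ_iff.1 hk)]
  field_simp
  exact (mul_div_mul_right _ _ (Nat.cast_ne_zero.2 n.factorial_ne_zero)).symm

theorem C_mul_exp (c : K) : C c * exp K = mk fun n => c / n ! := by
  ext n
  simp [coeff_exp, div_eq_mul_inv]

theorem C_mul_exp_sub_rescale_exp (c : K) :
    C c * exp K - rescale c (exp K) = mk fun n => (c - c ^ n) / n ! := by
  ext n
  simp [coeff_exp, div_eq_mul_inv, sub_mul]

end ExponentialGeneratingFunctions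

section Rows

variable {R : Type*} [CommRing R] (N : ℕ → ℕ → ℕ) (x : R)

def rowSum (n : ℕ) : R := ∑ r ∈ range (n + 1), (N (r + 1) n : R) * x ^ r

def NestedRecursion : Prop :=
  ∀ r n, 1 < r →
    N r n = ∑ᶠ k ∈ Set.Ici 1, ∑ᶠ s ∈ Set.Ici (k + 1), n.choose s * N (r - k) (n - s)

variable {N}

theorem NestedRecursion.eq_sum_Icc (hrec : NestedRecursion N) {r n : ℕ} (hr : 1 < r) :
    N r n = ∑ k ∈ Icc 1 n, ∑ s ∈ Icc (k + 1) n, n.choose s * N (r - k) (n - s) := by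
  have hinner : ∀ k, ∑ᶠ s ∈ Set.Ici (k + 1), n.choose s * N (r - k) (n - s) =
      ∑ s ∈ Icc (k + 1) n, n.choose s * N (r - k) (n - s) := fun k =>
    finsum_mem_Ici_eq_sum_Icc fun s hs => by rw [Nat.choose_eq_zero_of_lt hs, zero_mul]
  rw [hrec r n hr, finsum_mem_Ici_eq_sum_Icc (n := n) fun k hk => by
    rw [hinner, Icc_eq_empty (by omega), sum_empty]]
  exact sum_congr rfl fun k _ => hinner k

theorem NestedRecursion.apply_succ_eq_ite_add_sum_Icc (hrec : NestedRecursion N)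
    (hN1 : ∀ m, N 1 m = 1) (h0 : ∀ n, N 0 n = 0) (r n : ℕ) :
    N (r + 1) n = (if r = 0 then 1 else 0) +
      ∑ k ∈ Icc 1 n, ∑ s ∈ Icc (k + 1) n, n.choose s * N (r + 1 - k) (n - s) := by
  rcases Nat.eq_zero_or_pos r with rfl | hr
  · rw [hN1, if_pos rfl, sum_eq_zero fun k hk => sum_eq_zero fun s _ => by
      rw [show 0 + 1 - k = 0 by simp at hk; omega, h0, mul_zero], add_zero]
  · rw [if_neg hr.ne', zero_add]
    exact hrec.eq_sum_Icc (by omega)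

theorem rowSum_eq_sum_range (hvan : ∀ r n, n < r → N (r + 1) n = 0) {n L : ℕ}
    (hL : n + 1 ≤ L) : rowSum N x n = ∑ r ∈ range L, (N (r + 1) n : R) * x ^ r := by
  refine sum_subset (range_subset_range.2 hL) fun r _ hr => ?_
  rw [hvan r n (by simpa using hr), Nat.cast_zero, zero_mul]

theorem finsum_eq_rowSum (hvan : ∀ r n, n < r → N (r + 1) n = 0) (n : ℕ) :
    ∑ᶠ r, (N (r + 1) n : R) * x ^ r = rowSum N x n := by
  refine finsum_eq_sum_of_support_subset _ fun r hr => ?_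
  by_contra h
  exact hr (by simp [hvan r n (by simpa using h)])

theorem sum_range_sub_eq_pow_mul_rowSum (h0 : ∀ n, N 0 n = 0)
    (hvan : ∀ r n, n < r → N (r + 1) n = 0) {n k m : ℕ} (hkm : k + m ≤ n) :
    ∑ r ∈ range (n + 1), (N (r + 1 - k) m : R) * x ^ r = x ^ k * rowSum N x m := by
  have hlow : ∀ r ∈ range k, (N (r + 1 - k) m : R) * x ^ r = 0 := fun r hr => by
    rw [show r + 1 - k = 0 by simp at hr; omega, h0, Nat.cast_zero, zero_mul]
  rw [show n + 1 = k + (n + 1 - k) by omega, sum_range_add, sum_eq_zero hlow, zero_add,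
    rowSum_eq_sum_range x hvan (L := n + 1 - k) (by omega), mul_sum]
  refine sum_congr rfl fun j _ => ?_
  rw [show k + j + 1 - k = j + 1 by omega, pow_add]
  ring

theorem rowSum_eq_one_add (hrec : NestedRecursion N) (hN1 : ∀ m, N 1 m = 1)
    (h0 : ∀ n, N 0 n = 0) (hvan : ∀ r n, n < r → N (r + 1) n = 0) (n : ℕ) :
    rowSum N x n = 1 + ∑ k ∈ Icc 1 n, ∑ s ∈ Icc (k + 1) n,
      (n.choose s : R) * x ^ k * rowSum N x (n - s) := by
  calc rowSum N x n
      = ∑ r ∈ range (n + 1), (if r = 0 then 1 else 0) * x ^ r +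
          ∑ r ∈ range (n + 1), ∑ k ∈ Icc 1 n, ∑ s ∈ Icc (k + 1) n,
            (n.choose s : R) * ((N (r + 1 - k) (n - s) : R) * x ^ r) := by
        rw [← sum_add_distrib]
        refine sum_congr rfl fun r _ => ?_
        rw [hrec.apply_succ_eq_ite_add_sum_Icc hN1 h0 r n]
        push_cast
        simp only [add_mul, sum_mul, mul_assoc]
    _ = 1 + ∑ k ∈ Icc 1 n, ∑ s ∈ Icc (k + 1) n,
          (n.choose s : R) * ∑ r ∈ range (n + 1), (N (r + 1 - k) (n - s) : R) * x ^ r := by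
        simp only [ite_mul, one_mul, zero_mul, sum_ite_eq', mem_range, Nat.zero_lt_succ,
          if_true, pow_zero, mul_sum]
        rw [sum_comm]
        exact congrArg _ (sum_congr rfl fun k _ => sum_comm)
    _ = _ := congrArg (1 + ·) <| sum_congr rfl fun k _ => sum_congr rfl fun s hs => by
        rw [sum_range_sub_eq_pow_mul_rowSum x h0 hvan (by simp at hs; omega)]
        ring

theorem sub_one_mul_rowSum_sub_one (hrec : NestedRecursion N) (hN1 : ∀ m, N 1 m = 1)
    (h0 : ∀ n, N 0 n = 0) (hvan : ∀ r n, n < r → N (r + 1) n = 0) (n : ℕ) :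
    (x - 1) * (rowSum N x n - 1) =
      ∑ s ∈ Icc 1 n, (n.choose s : R) * (x ^ s - x) * rowSum N x (n - s) := by
  have hswap : ∑ k ∈ Icc 1 n, ∑ s ∈ Icc (k + 1) n,
        (n.choose s : R) * x ^ k * rowSum N x (n - s) =
      ∑ s ∈ Icc 1 n, ∑ k ∈ Ico 1 s, (n.choose s : R) * x ^ k * rowSum N x (n - s) :=
    sum_comm' fun k s => by simp only [mem_Icc, mem_Ico]; omega
  rw [rowSum_eq_one_add x hrec hN1 h0 hvan, add_sub_cancel_left, hswap, mul_sum]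
  refine sum_congr rfl fun s hs => ?_
  have hgeom := geom_sum_Ico_mul x (mem_Icc.1 hs).1
  rw [pow_one] at hgeom
  rw [← sum_mul, ← mul_sum]
  linear_combination (n.choose s * rowSum N x (n - s) : R) * hgeom

theorem sum_choose_mul_sub_pow_mul_rowSum (hrec : NestedRecursion N) (hN1 : ∀ m, N 1 m = 1)
    (h0 : ∀ n, N 0 n = 0) (hvan : ∀ r n, n < r → N (r + 1) n = 0) (n : ℕ) :
    ∑ s ∈ range (n + 1), (n.choose s : R) * (x - x ^ s) * rowSum N x (n - s) = x - 1 := by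
  have hrest := sub_one_mul_rowSum_sub_one x hrec hN1 h0 hvan n
  have hneg : ∑ s ∈ Icc 1 n, (n.choose s : R) * (x - x ^ s) * rowSum N x (n - s) =
      -∑ s ∈ Icc 1 n, (n.choose s : R) * (x ^ s - x) * rowSum N x (n - s) := by
    rw [← sum_neg_distrib]
    exact sum_congr rfl fun _ _ => by ring
  rw [range_eq_Ico, sum_eq_sum_Ico_succ_bot (Nat.zero_lt_succ n), zero_add,
    Nat.succ_eq_add_one, Ico_add_one_right_eq_Icc, Nat.choose_zero_right, pow_zero,
    Nat.sub_zero]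
  linear_combination hneg + hrest

end Rows

/-- Let `N_{r,n}` satisfy `N_{1,m} = 1` for all `m ≥ 0`, `N_{r,n} = 0` whenever
`(r,n)` is not of the form `1 ≤ r ≤ n` (except `N_{1,0} = 1`), and the recursion
`N_{r,n} = ∑_{k ≥ 1} ∑_{s ≥ k+1} C(n,s) N_{r-k,n-s}` for `r > 1`. Then the exponential
generating function `∑_{n,r} N_{r+1,n} x^r t^n / n!` equals `(x-1)/(x - e^{(x-1)t})`,
i.e. (clearing the denominator, as power series in `t` over the field `ℚ(x)`)
`(∑_n (∑_r N_{r+1,n} x^r) t^n / n!) ⬝ (x - e^{(x-1)t}) = x - 1`. -/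
theorem nested_generating_function (N : ℕ → ℕ → ℕ)
    (hN1 : ∀ m, N 1 m = 1)
    (hN0 : ∀ r n, ¬(1 ≤ r ∧ r ≤ n ∧ 1 ≤ n) → ¬(r = 1 ∧ n = 0) → N r n = 0)
    (hrec : ∀ r n, 1 < r →
      N r n = ∑ᶠ k ∈ Set.Ici 1, ∑ᶠ s ∈ Set.Ici (k + 1), n.choose s * N (r - k) (n - s)) :
    (PowerSeries.mk fun n =>
        (∑ᶠ r : ℕ, (N (r + 1) n : RatFunc ℚ) * RatFunc.X ^ r) / (n.factorial : RatFunc ℚ)) *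
      ((PowerSeries.C (R := RatFunc ℚ)) RatFunc.X -
        PowerSeries.rescale (RatFunc.X - 1) (PowerSeries.exp (RatFunc ℚ))) =
    (PowerSeries.C (R := RatFunc ℚ)) (RatFunc.X - 1) := by
  have h0 : ∀ n, N 0 n = 0 := fun n => hN0 0 n (by omega) (by omega)
  have hvan : ∀ r n, n < r → N (r + 1) n = 0 := fun r n h => hN0 _ _ (by omega) (by omega)
  set x : RatFunc ℚ := RatFunc.X
  have hexp : rescale (x - 1) (exp (RatFunc ℚ)) * exp (RatFunc ℚ) =
      rescale x (exp (RatFunc ℚ)) := by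
    simpa [rescale_one] using exp_mul_exp_eq_exp_add (x - 1) (1 : RatFunc ℚ)
  simp only [finsum_eq_rowSum x hvan]
  refine mul_right_cancel₀ (isUnit_exp (RatFunc ℚ)).ne_zero ?_
  calc _ = (C x * exp (RatFunc ℚ) - rescale x (exp (RatFunc ℚ))) *
        mk fun n => rowSum N x n / n ! := by
        rw [← hexp]
        ring
    _ = mk fun n => (x - 1) / n ! := by
        rw [C_mul_exp_sub_rescale_exp, mk_div_factorial_mul_mk_div_factorial]
        simp only [sum_choose_mul_sub_pow_mul_rowSum x hrec hN1 h0 hvan]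
    _ = _ := (C_mul_exp _).symm
end
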